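/- arXiv:1709.07779 — 4 statements merged into one kernel-verified Lean document; each statement's English description precedes it below -/
import Mathlib

section
/- Suppose E(Y|A,G,U)=β_a·A+β_g(U,G)+β_u(U) almost surely for a constant β_a, where β_g and β_u are measurable functions of (U,G) and U respectively, and suppose U is independent of A conditionally on G (no unmeasured confounding given G). Then for any bounded measurable function h, E[h(G)·{A−E(A|G)}·{Y−β_a·A}] = 0. -/
open MeasureTheory ProbabilityTheory

/-- Conditional expectation of the real random variable `X` given the σ-algebra
generated by the random variable `Z`. -/
noncomputable def cExp {Ω β : Type*} [MeasurableSpace Ω] [mβ : MeasurableSpace β]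
    (μ : Measure Ω) (Z : Ω → β) (X : Ω → ℝ) : Ω → ℝ :=
  μ[X | MeasurableSpace.comap Z mβ]

/-- Conditional covariance `cov(X, W | Z) = E(XW|Z) - E(X|Z)E(W|Z)`. -/
noncomputable def cCov {Ω β : Type*} [MeasurableSpace Ω] [mβ : MeasurableSpace β]
    (μ : Measure Ω) (Z : Ω → β) (X W : Ω → ℝ) : Ω → ℝ :=
  fun ω => cExp μ Z (fun ω' => X ω' * W ω') ω - cExp μ Z X ω * cExp μ Z W ω

/-- Conditional variance `var(X | Z) = E(X²|Z) - E(X|Z)²`. -/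
noncomputable def cVar {Ω β : Type*} [MeasurableSpace Ω] [mβ : MeasurableSpace β]
    (μ : Measure Ω) (Z : Ω → β) (X : Ω → ℝ) : Ω → ℝ :=
  fun ω => cExp μ Z (fun ω' => X ω' ^ 2) ω - (cExp μ Z X ω) ^ 2

open MeasurableSpace Set

namespace MeasurableSpace

variable {Ω : Type*}

lemma sup_eq_generateFrom_image2_inter (m₁ m₂ : MeasurableSpace Ω) :
    m₁ ⊔ m₂ =
      generateFrom (image2 (· ∩ ·) {s | MeasurableSet[m₁] s} {t | MeasurableSet[m₂] t}) := by
  refine le_antisymm (sup_le ?_ ?_) (generateFrom_le ?_)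
  · exact fun s hs ↦
      measurableSet_generateFrom ⟨s, hs, univ, @MeasurableSet.univ _ m₂, inter_univ s⟩
  · exact fun t ht ↦
      measurableSet_generateFrom ⟨univ, @MeasurableSet.univ _ m₁, t, ht, univ_inter t⟩
  · rintro _ ⟨s, hs, t, ht, rfl⟩
    exact (le_sup_left (b := m₂) s hs).inter (le_sup_right (a := m₁) t ht)

lemma isPiSystem_image2_inter (m₁ m₂ : MeasurableSpace Ω) :
    IsPiSystem (image2 (· ∩ ·) {s | MeasurableSet[m₁] s} {t | MeasurableSet[m₂] t}) := by
  rintro _ ⟨s₁, hs₁, t₁, ht₁, rfl⟩ _ ⟨s₂, hs₂, t₂, ht₂, rfl⟩ -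
  exact ⟨s₁ ∩ s₂, hs₁.inter hs₂, t₁ ∩ t₂, ht₁.inter ht₂, inter_inter_inter_comm _ _ _ _⟩

end MeasurableSpace

namespace MeasureTheory

variable {Ω : Type*} {m m' m₁ mΩ : MeasurableSpace Ω} {μ : Measure Ω}

theorem ae_eq_condExp_sup_of_setIntegral_inter_eq {E : Type*} [NormedAddCommGroup E]
    [NormedSpace ℝ E] [CompleteSpace E] [IsFiniteMeasure μ] (hm' : m' ≤ mΩ) (hm₁ : m₁ ≤ mΩ)
    {f g : Ω → E} (hf : Integrable f μ) (hg : StronglyMeasurable[m'] g) (hgi : Integrable g μ)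
    (h : ∀ s t, MeasurableSet[m'] s → MeasurableSet[m₁] t →
      ∫ x in s ∩ t, g x ∂μ = ∫ x in s ∩ t, f x ∂μ) :
    g =ᵐ[μ] μ[f | m' ⊔ m₁] := by
  have hsup : m' ⊔ m₁ ≤ mΩ := sup_le hm' hm₁
  have hsetIntegral : ∀ q, MeasurableSet[m' ⊔ m₁] q → ∫ x in q, g x ∂μ = ∫ x in q, f x ∂μ := by
    intro q hq
    induction q, hq using induction_on_inter (sup_eq_generateFrom_image2_inter m' m₁)
      (isPiSystem_image2_inter m' m₁) with
    | empty => simp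
    | basic _ hq =>
      obtain ⟨s, hs, t, ht, rfl⟩ := hq
      exact h s t hs ht
    | compl q hq ih =>
      have htotal := h univ univ MeasurableSet.univ MeasurableSet.univ
      rw [inter_univ, Measure.restrict_univ] at htotal
      rw [setIntegral_compl (hsup q hq) hgi, setIntegral_compl (hsup q hq) hf, htotal, ih]
    | iUnion q hdisj hq ih =>
      rw [integral_iUnion (fun i ↦ hsup _ (hq i)) hdisj hgi.integrableOn,
        integral_iUnion (fun i ↦ hsup _ (hq i)) hdisj hf.integrableOn]
      exact tsum_congr ih
  exact ae_eq_condExp_of_forall_setIntegral_eq hsup hf (fun _ _ _ ↦ hgi.integrableOn)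
    (fun q hq _ ↦ hsetIntegral q hq) (hg.mono (le_sup_left : m' ≤ m' ⊔ m₁)).aestronglyMeasurable

theorem condExp_sub_ae_eq_of_condExp_ae_eq_add (hm : m ≤ mΩ) [SigmaFinite (μ.trim hm)]
    {Y Z F : Ω → ℝ} (hZ : StronglyMeasurable[m] Z) (hY : Integrable Y μ) (hZi : Integrable Z μ)
    (h : μ[Y | m] =ᵐ[μ] Z + F) : μ[Y - Z | m] =ᵐ[μ] F := by
  filter_upwards [condExp_sub hY hZi m, h] with ω hsub hω
  rw [hsub, condExp_of_stronglyMeasurable hm hZ hZi, Pi.sub_apply, hω, Pi.add_apply,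
    add_sub_cancel_left]

theorem integral_mul_condExp (hm : m ≤ mΩ) [SigmaFinite (μ.trim hm)] {f g : Ω → ℝ}
    (hf : StronglyMeasurable[m] f) (hfg : Integrable (f * g) μ) (hg : Integrable g μ) :
    ∫ x, f x * μ[g | m] x ∂μ = ∫ x, f x * g x ∂μ :=
  (integral_congr_ae (condExp_mul_of_stronglyMeasurable_left hf hfg hg).symm).trans
    (integral_condExp hm)

theorem integrable_mul_condExp {f g : Ω → ℝ} (hf : StronglyMeasurable[m] f)
    (hfg : Integrable (f * g) μ) (hg : Integrable g μ) : Integrable (f * μ[g | m]) μ :=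
  integrable_condExp.congr (condExp_mul_of_stronglyMeasurable_left hf hfg hg)

theorem integral_mul_sub_condExp_mul_eq_zero [IsFiniteMeasure μ]
    {mG mGU mT : MeasurableSpace Ω} (hGU : mG ≤ mGU) (hUT : mGU ≤ mT) (hT : mT ≤ mΩ)
    {φ A R F : Ω → ℝ} {C : ℝ} (hφ : StronglyMeasurable[mG] φ) (hφC : ∀ᵐ ω ∂μ, ‖φ ω‖ ≤ C)
    (hA : StronglyMeasurable[mT] A) (hAi : Integrable A μ) (hR : Integrable R μ)
    (hAR : Integrable ((A - μ[A | mG]) * R) μ) (hF : StronglyMeasurable[mGU] F)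
    (hRF : μ[R | mT] =ᵐ[μ] F) (hres : μ[A - μ[A | mG] | mGU] =ᵐ[μ] 0) :
    ∫ ω, φ ω * (A ω - μ[A | mG] ω) * R ω ∂μ = 0 := by
  have hV : StronglyMeasurable[mT] (A - μ[A | mG]) :=
    hA.sub (stronglyMeasurable_condExp.mono (hGU.trans hUT))
  have hφV : StronglyMeasurable[mT] (fun ω ↦ φ ω * (A ω - μ[A | mG] ω)) :=
    (hφ.mono (hGU.trans hUT)).mul hV
  have hφF : StronglyMeasurable[mGU] (fun ω ↦ φ ω * F ω) := (hφ.mono hGU).mul hF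
  have hφΩ : AEStronglyMeasurable[mΩ] φ μ :=
    (hφ.mono (hGU.trans (hUT.trans hT))).aestronglyMeasurable
  have hφVR : Integrable ((fun ω ↦ φ ω * (A ω - μ[A | mG] ω)) * R) μ :=
    (hAR.bdd_mul hφΩ hφC).congr
      (.of_forall fun ω ↦ by simp only [Pi.mul_apply, Pi.sub_apply]; ring)
  have hVF : Integrable ((A - μ[A | mG]) * F) μ :=
    (integrable_mul_condExp hV hAR hR).congr (hRF.mono fun ω hω ↦ by simp [hω])
  have hφFV : Integrable ((fun ω ↦ φ ω * F ω) * (A - μ[A | mG])) μ :=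
    (hVF.bdd_mul hφΩ hφC).congr
      (.of_forall fun ω ↦ by simp only [Pi.mul_apply, Pi.sub_apply]; ring)
  calc ∫ ω, φ ω * (A ω - μ[A | mG] ω) * R ω ∂μ
      = ∫ ω, φ ω * (A ω - μ[A | mG] ω) * μ[R | mT] ω ∂μ :=
        (integral_mul_condExp hT hφV hφVR hR).symm
    _ = ∫ ω, φ ω * F ω * μ[A - μ[A | mG] | mGU] ω ∂μ := by
        rw [integral_mul_condExp (hUT.trans hT) hφF hφFV
          (hAi.sub integrable_condExp)]
        refine integral_congr_ae (hRF.mono fun ω hω ↦ ?_)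
        simp only [hω, Pi.sub_apply]
        ring
    _ = 0 := integral_eq_zero_of_ae (hres.mono fun ω hω ↦ by simp [hω])

end MeasureTheory

namespace ProbabilityTheory

variable {Ω : Type*} {m' m₁ m₂ mΩ : MeasurableSpace Ω} [StandardBorelSpace Ω] {hm' : m' ≤ mΩ}
  {μ : Measure Ω} [IsFiniteMeasure μ]

lemma CondIndep.setIntegral_inter_condExp_indicator (hm₁ : m₁ ≤ mΩ) (hm₂ : m₂ ≤ mΩ)
    (h : CondIndep m' m₁ m₂ hm' μ) {s t ρ : Set Ω} (hs : MeasurableSet[m'] s)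
    (ht : MeasurableSet[m₁] t) (hρ : MeasurableSet[m₂] ρ) :
    ∫ x in s ∩ t, (μ⟦ρ | m'⟧) x ∂μ = ∫ x in s ∩ t, ρ.indicator (fun _ ↦ (1 : ℝ)) x ∂μ := by
  have hprod := (condIndep_iff m' m₁ m₂ hm' hm₁ hm₂ μ).1 h t ρ ht hρ
  have hint : Integrable (t.indicator (fun _ ↦ (1 : ℝ)) * μ⟦ρ | m'⟧) μ :=
    integrable_condExp.bdd_mul
      ((stronglyMeasurable_const.indicator (hm₁ t ht)).aestronglyMeasurable)
      (.of_forall fun x ↦ norm_indicator_le_norm_self _ x)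
  have hpull : μ[t.indicator (fun _ ↦ (1 : ℝ)) * μ⟦ρ | m'⟧ | m'] =ᵐ[μ] μ⟦t | m'⟧ * μ⟦ρ | m'⟧ :=
    condExp_mul_of_stronglyMeasurable_right stronglyMeasurable_condExp hint
      ((integrable_const 1).indicator (hm₁ t ht))
  calc ∫ x in s ∩ t, (μ⟦ρ | m'⟧) x ∂μ
      = ∫ x in s, (t.indicator (fun _ ↦ (1 : ℝ)) * μ⟦ρ | m'⟧) x ∂μ := by
        rw [← setIntegral_indicator (hm₁ t ht)]
        congr 1 with x
        by_cases hx : x ∈ t <;> simp [hx]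
    _ = ∫ x in s, (μ⟦t | m'⟧ * μ⟦ρ | m'⟧) x ∂μ := by
        rw [← setIntegral_condExp hm' hint hs]
        exact setIntegral_congr_ae (hm' s hs) (hpull.mono fun x hx _ ↦ hx)
    _ = ∫ x in s, (μ⟦t ∩ ρ | m'⟧) x ∂μ :=
        setIntegral_congr_ae (hm' s hs) (hprod.mono fun x hx _ ↦ hx.symm)
    _ = ∫ x in s ∩ t, ρ.indicator (fun _ ↦ (1 : ℝ)) x ∂μ := by
        rw [setIntegral_condExp hm'
            ((integrable_const 1).indicator ((hm₁ t ht).inter (hm₂ ρ hρ))) hs,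
          ← setIntegral_indicator (hm₁ t ht), indicator_indicator]

lemma CondIndep.setIntegral_inter_condExp (hm₁ : m₁ ≤ mΩ) (hm₂ : m₂ ≤ mΩ)
    (h : CondIndep m' m₁ m₂ hm' μ) {f : Ω → ℝ} (hf : StronglyMeasurable[m₂] f)
    (hfi : Integrable f μ) {s t : Set Ω} (hs : MeasurableSet[m'] s) (ht : MeasurableSet[m₁] t) :
    ∫ x in s ∩ t, μ[f | m'] x ∂μ = ∫ x in s ∩ t, f x ∂μ := by
  refine MemLp.induction_stronglyMeasurable hm₂ ENNReal.one_ne_top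
    (fun f ↦ ∫ x in s ∩ t, μ[f | m'] x ∂μ = ∫ x in s ∩ t, f x ∂μ) ?_ ?_ ?_ ?_
    (memLp_one_iff_integrable.2 hfi) hf.aestronglyMeasurable
  · intro c ρ hρ _
    have hc : ρ.indicator (fun _ ↦ c) = c • ρ.indicator (fun _ ↦ (1 : ℝ)) := by
      ext x; by_cases hx : x ∈ ρ <;> simp [hx]
    simp only [hc]
    rw [integral_congr_ae (ae_restrict_of_ae (condExp_smul c _ m'))]
    simp only [Pi.smul_apply, smul_eq_mul, integral_const_mul,
      h.setIntegral_inter_condExp_indicator hm₁ hm₂ hs ht hρ]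
  · intro f g _ hf hg _ _ hPf hPg
    rw [memLp_one_iff_integrable] at hf hg
    rw [integral_congr_ae (ae_restrict_of_ae (condExp_add hf hg m')),
      integral_add' integrable_condExp.integrableOn integrable_condExp.integrableOn,
      integral_add' hf.integrableOn hg.integrableOn, hPf, hPg]
  · have hcondExp : (fun F : lpMeas ℝ ℝ m₂ 1 μ ↦ ∫ x in s ∩ t, μ[(F : Ω → ℝ) | m'] x ∂μ) =
        fun F : lpMeas ℝ ℝ m₂ 1 μ ↦ ∫ x in s ∩ t, condExpL1CLM ℝ hm' μ (F : Ω →₁[μ] ℝ) x ∂μ := by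
      funext F
      refine integral_congr_ae (ae_restrict_of_ae ?_)
      have := condExp_ae_eq_condExpL1CLM hm' (L1.integrable_coeFn (F : Ω →₁[μ] ℝ))
      rwa [Integrable.toL1_coeFn] at this
    refine isClosed_eq ?_ ((continuous_setIntegral _).comp continuous_subtype_val)
    rw [hcondExp]
    exact (continuous_setIntegral _).comp
      ((condExpL1CLM ℝ hm' μ).continuous.comp continuous_subtype_val)
  · intro f g hfg _ hPf
    rwa [← integral_congr_ae (ae_restrict_of_ae hfg),
      ← integral_congr_ae (ae_restrict_of_ae (condExp_congr_ae hfg))]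

theorem CondIndep.condExp_sup_ae_eq (hm₁ : m₁ ≤ mΩ) (hm₂ : m₂ ≤ mΩ)
    (h : CondIndep m' m₁ m₂ hm' μ) {f : Ω → ℝ} (hf : StronglyMeasurable[m₂] f) :
    μ[f | m' ⊔ m₁] =ᵐ[μ] μ[f | m'] := by
  by_cases hfi : Integrable f μ
  · exact (ae_eq_condExp_sup_of_setIntegral_inter_eq hm' hm₁ hfi stronglyMeasurable_condExp
      integrable_condExp fun s t hs ht ↦ h.setIntegral_inter_condExp hm₁ hm₂ hf hfi hs ht).symm
  · simp [condExp_of_not_integrable hfi]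

theorem CondIndep.condExp_sup_sub_condExp_ae_eq_zero (hm₁ : m₁ ≤ mΩ) (hm₂ : m₂ ≤ mΩ)
    (h : CondIndep m' m₁ m₂ hm' μ) {f : Ω → ℝ} (hf : StronglyMeasurable[m₂] f)
    (hfi : Integrable f μ) :
    μ[f - μ[f | m'] | m' ⊔ m₁] =ᵐ[μ] 0 := by
  filter_upwards [condExp_sub hfi integrable_condExp (m' ⊔ m₁),
    h.condExp_sup_ae_eq hm₁ hm₂ hf] with ω hsub hsup
  rw [hsub, Pi.sub_apply, hsup, condExp_of_stronglyMeasurable (sup_le hm' hm₁)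
    (stronglyMeasurable_condExp.mono le_sup_left) integrable_condExp, sub_self, Pi.zero_apply]

end ProbabilityTheory

theorem stmt4_general {Ω 𝓤 : Type*} [MeasurableSpace Ω] [StandardBorelSpace Ω]
    [MeasurableSpace 𝓤]
    (μ : Measure Ω) [IsProbabilityMeasure μ]
    (Y A G : Ω → ℝ) (U : Ω → 𝓤) (βa : ℝ)
    (βg : 𝓤 → ℝ → ℝ) (βu : 𝓤 → ℝ)
    (hAm : Measurable A) (hGm : Measurable G) (hUm : Measurable U)
    (hβgm : Measurable (Function.uncurry βg)) (hβum : Measurable βu)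
    -- outcome model: E(Y|A,G,U) = β_a·A + β_g(U,G) + β_u(U) almost surely
    (hout : cExp μ (fun ω => (A ω, G ω, U ω)) Y
        =ᵐ[μ] fun ω => βa * A ω + βg (U ω) (G ω) + βu (U ω))
    -- no unmeasured confounding given G: U ⫫ A | G
    (hCI : CondIndepFun (MeasurableSpace.comap G inferInstance) hGm.comap_le U A μ)
    -- all expectations appearing in the statement are assumed finite
    (hIntY : Integrable Y μ) (hIntA : Integrable A μ)
    (hIntA2 : Integrable (fun ω => (A ω) ^ 2) μ)
    (hIntAY : Integrable (fun ω => A ω * Y ω) μ)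
    (hIntEAY : Integrable (fun ω => cExp μ G A ω * Y ω) μ)
    (hIntEAA : Integrable (fun ω => cExp μ G A ω * A ω) μ) :
    ∀ h : ℝ → ℝ, Measurable h → (∃ C, ∀ x, |h x| ≤ C) →
      ∫ ω, h (G ω) * (A ω - cExp μ G A ω) * (Y ω - βa * A ω) ∂μ = 0 := by
  rintro h hhm ⟨C, hC⟩
  have hT := (hAm.prodMk (hGm.prodMk hUm)).comap_le
  have hAGUT : Measurable[MeasurableSpace.comap (fun ω => (A ω, G ω, U ω)) inferInstance]
      (fun ω => (A ω, G ω, U ω)) := comap_measurable _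
  have hGU : Measurable[MeasurableSpace.comap G inferInstance ⊔
      MeasurableSpace.comap U inferInstance] (fun ω ↦ (G ω, U ω)) :=
    ((comap_measurable G).mono le_sup_left le_rfl).prodMk
      ((comap_measurable U).mono le_sup_right le_rfl)
  have hGUle : MeasurableSpace.comap G inferInstance ⊔ MeasurableSpace.comap U inferInstance ≤
      MeasurableSpace.comap (fun ω => (A ω, G ω, U ω)) inferInstance :=
    sup_le (measurable_fst.comp (measurable_snd.comp hAGUT)).comap_le
      (measurable_snd.comp (measurable_snd.comp hAGUT)).comap_le
  have hAT := measurable_fst.comp hAGUT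
  refine integral_mul_sub_condExp_mul_eq_zero le_sup_left hGUle hT
    (φ := fun ω ↦ h (G ω)) (R := fun ω ↦ Y ω - βa * A ω)
    (hhm.comp (comap_measurable G)).stronglyMeasurable (.of_forall fun ω ↦ hC (G ω))
    hAT.stronglyMeasurable hIntA (hIntY.sub (hIntA.const_mul βa)) ?_
    ((hβgm.comp (hGU.snd.prodMk hGU.fst)).add (hβum.comp hGU.snd)).stronglyMeasurable
    (condExp_sub_ae_eq_of_condExp_ae_eq_add hT (hAT.const_mul βa).stronglyMeasurable hIntY
      (hIntA.const_mul βa) (hout.trans (.of_forall fun ω ↦ add_assoc _ _ _)))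
    (((condIndepFun_iff_condIndep _ _ U A μ).1 hCI).condExp_sup_sub_condExp_ae_eq_zero
      hUm.comap_le hAm.comap_le (comap_measurable A).stronglyMeasurable hIntA)
  refine ((((hIntAY.sub (hIntA2.const_mul βa)).sub hIntEAY).add (hIntEAA.const_mul βa))).congr
    (.of_forall fun ω ↦ ?_)
  simp only [cExp, Pi.mul_apply, Pi.sub_apply, Pi.add_apply]
  ring

/-- G-estimation under no unmeasured confounding given `G`.
If `E(Y|A,G,U) = β_a·A + β_g(U,G) + β_u(U)` a.s. for a constant `β_a` and `U ⫫ A | G`,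
then for every bounded measurable `h`, `E[h(G)·{A−E(A|G)}·{Y−β_a·A}] = 0`. -/
theorem stmt4 {Ω 𝓤 : Type*} [MeasurableSpace Ω] [StandardBorelSpace Ω] [Nonempty Ω]
    [MeasurableSpace 𝓤]
    (μ : Measure Ω) [IsProbabilityMeasure μ]
    (Y A G : Ω → ℝ) (U : Ω → 𝓤) (βa : ℝ)
    (βg : 𝓤 → ℝ → ℝ) (βu : 𝓤 → ℝ)
    (hYm : Measurable Y) (hAm : Measurable A) (hGm : Measurable G) (hUm : Measurable U)
    (hβgm : Measurable (Function.uncurry βg)) (hβum : Measurable βu)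
    -- outcome model: E(Y|A,G,U) = β_a·A + β_g(U,G) + β_u(U) almost surely
    (hout : cExp μ (fun ω => (A ω, G ω, U ω)) Y
        =ᵐ[μ] fun ω => βa * A ω + βg (U ω) (G ω) + βu (U ω))
    -- no unmeasured confounding given G: U ⫫ A | G
    (hCI : CondIndepFun (MeasurableSpace.comap G inferInstance) hGm.comap_le U A μ)
    -- all expectations appearing in the statement are assumed finite
    (hIntY : Integrable Y μ) (hIntA : Integrable A μ)
    (hIntA2 : Integrable (fun ω => (A ω) ^ 2) μ)
    (hIntAY : Integrable (fun ω => A ω * Y ω) μ)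
    (hIntEAY : Integrable (fun ω => cExp μ G A ω * Y ω) μ)
    (hIntEAA : Integrable (fun ω => cExp μ G A ω * A ω) μ) :
    ∀ h : ℝ → ℝ, Measurable h → (∃ C, ∀ x, |h x| ≤ C) →
      ∫ ω, h (G ω) * (A ω - cExp μ G A ω) * (Y ω - βa * A ω) ∂μ = 0 :=
  stmt4_general μ Y A G U βa βg βu hAm hGm hUm hβgm hβum hout hCI hIntY hIntA hIntA2 hIntAY hIntEAY
    hIntEAA
end

section
/- Let A be a binary (0/1) random variable and G a finitely supported random variable whose joint probability mass function satisfies f(a,g) = c·f(a|g=0)·f(g|a=0)·exp{φ_g(g)·a} for a normalizing constant c>0, where f(a|g=0) and f(g|a=0) are the conditional pmfs given {G=0} and {A=0} respectively and φ_g is a real-valued function with φ_g(0)=0. Then for any functions t_1 of A and t_2 of G, with t(A,G)=t_1(A)+t_2(G), E[ t(A,G)·{G−E(G|A=0)}·{A−E(A|G=0)}·exp{−φ_g(G)·A} ] = 0. -/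
open MeasureTheory ProbabilityTheory

/-!
Reweighting by `exp{-φ_g(G)·A}` cancels the interaction term of the factorized pmf, so under the
reweighted law `(A, G)` has the product pmf `c·f(a|g=0)·f(g|a=0)` and the expectation becomes a
double sum over `a` and `g`. Since `t` is additive, each of its two terms is free of one of the
variables, and the sum over that variable vanishes: it is the mean of `A - E(A|G=0)` under
`f(·|g=0)`, resp. of `G - E(G|A=0)` under `f(·|a=0)`.
-/

open Finset

lemma integral_comp_eq_sum_measureReal {Ω β : Type*} [MeasurableSpace Ω] [MeasurableSpace β]
    [MeasurableSingletonClass β] (ν : Measure Ω) [IsFiniteMeasure ν] {X : Ω → β}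
    (hX : Measurable X) {T : Finset β} (hT : ∀ ω, X ω ∈ T) (F : β → ℝ) :
    ∫ ω, F (X ω) ∂ν = ∑ x ∈ T, F x * ν.real {ω | X ω = x} := by
  have hfiber : ∀ x, MeasurableSet {ω | X ω = x} := fun x => hX (measurableSet_singleton x)
  have hsplit : (fun ω => F (X ω)) =
      fun ω => ∑ x ∈ T, {ω | X ω = x}.indicator (fun _ => F x) ω := by
    funext ω
    rw [sum_eq_single_of_mem (X ω) (hT ω)]
    · simp
    · intro x _ hx
      exact Set.indicator_of_notMem (Ne.symm hx) _
  rw [hsplit, integral_finsetSum _ fun x _ => (integrable_const (F x)).indicator (hfiber x)]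
  refine sum_congr rfl fun x _ => ?_
  rw [integral_indicator_const _ (hfiber x), smul_eq_mul, mul_comm]

lemma sum_measureReal_mul_sub_integral_eq_zero {Ω : Type*} [MeasurableSpace Ω]
    (ν : Measure Ω) [IsProbabilityMeasure ν] {X : Ω → ℝ} (hX : Measurable X) {T : Finset ℝ}
    (hT : ∀ ω, X ω ∈ T) :
    ∑ x ∈ T, ν.real {ω | X ω = x} * (x - ∫ ω, X ω ∂ν) = 0 := by
  have hmean := integral_comp_eq_sum_measureReal ν hX hT id
  have htotal := integral_comp_eq_sum_measureReal ν hX hT fun _ => 1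
  simp only [id] at hmean
  simp only [integral_const, probReal_univ, smul_eq_mul, one_mul] at htotal
  calc ∑ x ∈ T, ν.real {ω | X ω = x} * (x - ∫ ω, X ω ∂ν)
      = ∑ x ∈ T, x * ν.real {ω | X ω = x} - (∑ x ∈ T, ν.real {ω | X ω = x}) * ∫ ω, X ω ∂ν := by
        rw [sum_mul, ← sum_sub_distrib]
        exact sum_congr rfl fun _ _ => by ring
    _ = 0 := by rw [← hmean, ← htotal, one_mul, sub_self]

lemma sum_sum_mul_add_mul_eq_zero {α β : Type*} {S : Finset α} {T : Finset β}
    {p u f : α → ℝ} {q v g : β → ℝ}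
    (hp : ∑ a ∈ S, p a * f a = 0) (hq : ∑ b ∈ T, q b * g b = 0) :
    ∑ a ∈ S, ∑ b ∈ T, p a * q b * (u a + v b) * f a * g b = 0 := by
  have hsplit : ∀ a b, p a * q b * (u a + v b) * f a * g b =
      p a * u a * f a * (q b * g b) + p a * f a * (q b * v b * g b) := fun a b => by ring
  simp only [hsplit, sum_add_distrib, ← sum_mul_sum, hp, hq, mul_zero, zero_mul, add_zero]

theorem stmt10_general {Ω : Type*} [MeasurableSpace Ω] (μ : Measure Ω) [IsProbabilityMeasure μ]
    (A G : Ω → ℝ) (hAm : Measurable A) (hGm : Measurable G)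
    -- A is binary (0/1) and G is finitely supported
    (hAbin : ∀ ω, A ω = 0 ∨ A ω = 1)
    (hGfin : (Set.range G).Finite)
    -- the conditioning events have positive probability
    (hA0 : μ {ω | A ω = 0} ≠ 0) (hG0 : μ {ω | G ω = 0} ≠ 0)
    (φg : ℝ → ℝ) (c : ℝ)
    -- joint pmf factorization: f(a,g) = c·f(a|g=0)·f(g|a=0)·exp{φ_g(g)·a}
    (hpmf : ∀ a g : ℝ, (μ {ω | A ω = a ∧ G ω = g}).toReal =
      c * (ProbabilityTheory.cond μ {ω | G ω = 0} {ω | A ω = a}).toReal *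
        (ProbabilityTheory.cond μ {ω | A ω = 0} {ω | G ω = g}).toReal *
        Real.exp (φg g * a)) :
    ∀ t₁ t₂ : ℝ → ℝ,
      ∫ ω, (t₁ (A ω) + t₂ (G ω)) *
        (G ω - ∫ ω', G ω' ∂(ProbabilityTheory.cond μ {ω'' | A ω'' = 0})) *
        (A ω - ∫ ω', A ω' ∂(ProbabilityTheory.cond μ {ω'' | G ω'' = 0})) *
        Real.exp (-(φg (G ω) * A ω)) ∂μ = 0 := by
  intro t₁ t₂
  have := cond_isProbabilityMeasure hA0
  have := cond_isProbabilityMeasure hG0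
  set mG := ∫ ω, G ω ∂(ProbabilityTheory.cond μ {ω | A ω = 0})
  set mA := ∫ ω, A ω ∂(ProbabilityTheory.cond μ {ω | G ω = 0})
  set TA : Finset ℝ := {0, 1}
  set TG := hGfin.toFinset
  have hTA : ∀ ω, A ω ∈ TA := fun ω => by rcases hAbin ω with h | h <;> simp [TA, h]
  have hTG : ∀ ω, G ω ∈ TG := fun ω => hGfin.mem_toFinset.2 ⟨ω, rfl⟩
  have hexpand := integral_comp_eq_sum_measureReal μ (hAm.prodMk hGm)
    (fun ω => mem_product.2 ⟨hTA ω, hTG ω⟩)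
    (fun x => (t₁ x.1 + t₂ x.2) * (x.2 - mG) * (x.1 - mA) * Real.exp (-(φg x.2 * x.1)))
  refine hexpand.trans ?_
  have hterm : ∀ a g : ℝ, (t₁ a + t₂ g) * (g - mG) * (a - mA) * Real.exp (-(φg g * a)) *
      μ.real {ω | (A ω, G ω) = (a, g)} =
      c * ((ProbabilityTheory.cond μ {ω | G ω = 0}).real {ω | A ω = a} *
        (ProbabilityTheory.cond μ {ω | A ω = 0}).real {ω | G ω = g} *
        (t₁ a + t₂ g) * (a - mA) * (g - mG)) := by
    intro a g
    simp only [Prod.mk.injEq, measureReal_def, hpmf]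
    rw [Real.exp_neg]
    field_simp
  rw [sum_product, sum_congr rfl fun a _ => sum_congr rfl fun g _ => hterm a g]
  simp only [← mul_sum]
  rw [sum_sum_mul_add_mul_eq_zero
    (sum_measureReal_mul_sub_integral_eq_zero _ hAm hTA)
    (sum_measureReal_mul_sub_integral_eq_zero _ hGm hTG), mul_zero]

/-- key orthogonality identity in the proof of Lemma 4.3.
If the joint pmf of a binary `A` and a finitely supported `G` factorizes as
`f(a,g) = c·f(a|g=0)·f(g|a=0)·exp{φ_g(g)·a}`, then for all functions `t₁`, `t₂`, with
`t(A,G) = t₁(A) + t₂(G)`,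
`E[t(A,G)·{G−E(G|A=0)}·{A−E(A|G=0)}·exp{−φ_g(G)·A}] = 0`. -/
theorem stmt10 {Ω : Type*} [MeasurableSpace Ω] (μ : Measure Ω) [IsProbabilityMeasure μ]
    (A G : Ω → ℝ) (hAm : Measurable A) (hGm : Measurable G)
    -- A is binary (0/1) and G is finitely supported
    (hAbin : ∀ ω, A ω = 0 ∨ A ω = 1)
    (hGfin : (Set.range G).Finite)
    -- the conditioning events have positive probability
    (hA0 : μ {ω | A ω = 0} ≠ 0) (hG0 : μ {ω | G ω = 0} ≠ 0)
    (φg : ℝ → ℝ) (hφ0 : φg 0 = 0) (c : ℝ) (hc : 0 < c)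
    -- joint pmf factorization: f(a,g) = c·f(a|g=0)·f(g|a=0)·exp{φ_g(g)·a}
    (hpmf : ∀ a g : ℝ, (μ {ω | A ω = a ∧ G ω = g}).toReal =
      c * (ProbabilityTheory.cond μ {ω | G ω = 0} {ω | A ω = a}).toReal *
        (ProbabilityTheory.cond μ {ω | A ω = 0} {ω | G ω = g}).toReal *
        Real.exp (φg g * a)) :
    ∀ t₁ t₂ : ℝ → ℝ,
      ∫ ω, (t₁ (A ω) + t₂ (G ω)) *
        (G ω - ∫ ω', G ω' ∂(ProbabilityTheory.cond μ {ω'' | A ω'' = 0})) *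
        (A ω - ∫ ω', A ω' ∂(ProbabilityTheory.cond μ {ω'' | G ω'' = 0})) *
        Real.exp (-(φg (G ω) * A ω)) ∂μ = 0 :=
  stmt10_general μ A G hAm hGm hAbin hGfin hA0 hG0 φg c hpmf
end

section
/- Suppose G is independent of U, E(A|G,U) = α_g(G) + α_u(U) almost surely for measurable functions α_g of G and α_u of U, and D is an integrable random variable such that E(D|A,G,U) = k(U) almost surely for some integrable measurable function k of U. Then E[D·{G−E(G)}] = 0 and E[D·{G−E(G)}·{A−E(A|G)}] = 0. -/
/-!
Condition on `(A, G, U)`: since `G - E G` is a function of `(A, G, U)`, the hypothesis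
`E(D|A,G,U) = k(U)` replaces `D` by `k(U)`, and `E[(G - E G) h(U)] = 0` for every `h` because
`G` is independent of `U`. For the second moment, independence also turns the additive model
into `E(A|G) = α_g(G) + E α_u(U)`, hence `E(A - E(A|G) | G, U) = α_u(U) - E α_u(U)`; conditioning
once more, now on `(G, U)`, reduces the moment to the first case with
`h = k (α_u - E α_u(U))`.
-/

open MeasureTheory ProbabilityTheory

section PullOut

variable {Ω : Type*} {m m₀ : MeasurableSpace Ω} {μ : Measure Ω} {f g h : Ω → ℝ}

theorem integral_mul_eq_of_condExp_ae_eq (hm : m ≤ m₀) [SigmaFinite (μ.trim hm)]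
    (hf : AEStronglyMeasurable[m] f μ) (hfg : Integrable (fun ω => f ω * g ω) μ)
    (hg : Integrable g μ) (hgh : μ[g | m] =ᵐ[μ] h) :
    ∫ ω, f ω * g ω ∂μ = ∫ ω, f ω * h ω ∂μ := by
  calc ∫ ω, f ω * g ω ∂μ = ∫ ω, μ[fun ω => f ω * g ω | m] ω ∂μ := (integral_condExp hm).symm
    _ = ∫ ω, f ω * h ω ∂μ := by
      refine integral_congr_ae ?_
      filter_upwards [condExp_mul_of_aestronglyMeasurable_left hf hfg hg, hgh] with ω hfg hgh
      exact hfg.trans (congrArg (f ω * ·) hgh)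

theorem integrable_mul_of_condExp_ae_eq (hf : AEStronglyMeasurable[m] f μ)
    (hfg : Integrable (fun ω => f ω * g ω) μ) (hg : Integrable g μ) (hgh : μ[g | m] =ᵐ[μ] h) :
    Integrable (fun ω => f ω * h ω) μ := by
  refine (integrable_condExp (m := m) (f := fun ω => f ω * g ω)).congr ?_
  filter_upwards [condExp_mul_of_aestronglyMeasurable_left hf hfg hg, hgh] with ω hfg hgh
  exact hfg.trans (congrArg (f ω * ·) hgh)

theorem integral_mul_mul_eq_of_condExp_ae_eq [IsFiniteMeasure μ] {m₁ m₂ : MeasurableSpace Ω}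
    (hm₂₁ : m₂ ≤ m₁) (hm₁ : m₁ ≤ m₀) {D Z R Y W : Ω → ℝ} (hZ : StronglyMeasurable[m₂] Z)
    (hY : StronglyMeasurable[m₂] Y) (hR : StronglyMeasurable[m₁] R) (hD : Integrable D μ)
    (hRint : Integrable R μ) (hDZR : Integrable (fun ω => D ω * Z ω * R ω) μ)
    (hDY : μ[D | m₁] =ᵐ[μ] Y) (hRW : μ[R | m₂] =ᵐ[μ] W) :
    ∫ ω, D ω * Z ω * R ω ∂μ = ∫ ω, Z ω * (Y ω * W ω) ∂μ := by
  have hZR : StronglyMeasurable[m₁] fun ω => Z ω * R ω := (hZ.mono hm₂₁).mul hR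
  have hZRD : Integrable (fun ω => Z ω * R ω * D ω) μ :=
    hDZR.congr (ae_of_all _ fun ω => by ring)
  have hZYR : Integrable (fun ω => Z ω * Y ω * R ω) μ :=
    (integrable_mul_of_condExp_ae_eq hZR.aestronglyMeasurable hZRD hD hDY).congr
      (ae_of_all _ fun ω => by ring)
  calc ∫ ω, D ω * Z ω * R ω ∂μ = ∫ ω, Z ω * R ω * D ω ∂μ :=
        integral_congr_ae (ae_of_all _ fun ω => by ring)
    _ = ∫ ω, Z ω * R ω * Y ω ∂μ :=
        integral_mul_eq_of_condExp_ae_eq hm₁ hZR.aestronglyMeasurable hZRD hD hDY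
    _ = ∫ ω, Z ω * Y ω * R ω ∂μ := integral_congr_ae (ae_of_all _ fun ω => by ring)
    _ = ∫ ω, Z ω * Y ω * W ω ∂μ :=
        integral_mul_eq_of_condExp_ae_eq (hm₂₁.trans hm₁) (hZ.mul hY).aestronglyMeasurable
          hZYR hRint hRW
    _ = ∫ ω, Z ω * (Y ω * W ω) ∂μ := integral_congr_ae (ae_of_all _ fun ω => by ring)

end PullOut

section Independence

variable {Ω α β : Type*} [MeasurableSpace Ω] [MeasurableSpace α] [MeasurableSpace β]
  {μ : Measure Ω} [IsProbabilityMeasure μ]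

theorem ProbabilityTheory.IndepFun.integral_sub_integral_mul_eq_zero {X Y : Ω → ℝ}
    (hXY : IndepFun X Y μ) (hX : Integrable X μ) (hY : AEStronglyMeasurable Y μ) :
    ∫ ω, (X ω - ∫ ω', X ω' ∂μ) * Y ω ∂μ = 0 := by
  have hcentered : IndepFun (fun ω => X ω - ∫ ω', X ω' ∂μ) Y μ :=
    hXY.comp (measurable_id.sub_const _) measurable_id
  rw [hcentered.integral_fun_mul_eq_mul_integral
      (hX.aestronglyMeasurable.sub aestronglyMeasurable_const) hY,
    integral_sub hX (integrable_const _), integral_const, probReal_univ, one_smul, sub_self,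
    zero_mul]

theorem ProbabilityTheory.IndepFun.integrable_comp_of_integrable_add {X : Ω → α} {Y : Ω → β}
    (hXY : IndepFun X Y μ) (hX : AEMeasurable X μ) (hY : AEMeasurable Y μ)
    {f : α → ℝ} {g : β → ℝ} (hf : Measurable f) (hg : Measurable g)
    (hfg : Integrable (fun ω => f (X ω) + g (Y ω)) μ) :
    Integrable (fun ω => f (X ω)) μ ∧ Integrable (fun ω => g (Y ω)) μ := by
  have : IsProbabilityMeasure (μ.map Y) := Measure.isProbabilityMeasure_map hY
  have hprod : Integrable (fun p : α × β => f p.1 + g p.2) ((μ.map X).prod (μ.map Y)) := by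
    rw [← (indepFun_iff_map_prod_eq_prod_map_map hX hY).mp hXY]
    exact (integrable_map_measure
      ((hf.comp measurable_fst).add (hg.comp measurable_snd)).aestronglyMeasurable
      (hX.prodMk hY)).mpr hfg
  -- Fubini: some fibre `x ↦ f x + g y₀` of the product law is integrable
  obtain ⟨y₀, hy₀⟩ := hprod.prod_left_ae.exists
  have hfX : Integrable (fun ω => f (X ω)) μ := by
    refine (integrable_map_measure hf.aestronglyMeasurable hX).mp ?_
    exact (hy₀.sub (integrable_const (g y₀))).congr (ae_of_all _ fun x => by simp)
  exact ⟨hfX, (hfg.sub hfX).congr (ae_of_all _ fun ω => by simp)⟩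

theorem ProbabilityTheory.IndepFun.cExp_comp_add_comp {X : Ω → α} {Y : Ω → β}
    (hXY : IndepFun X Y μ) (hX : Measurable X) (hY : Measurable Y)
    {f : α → ℝ} {g : β → ℝ} (hf : Measurable f) (hg : Measurable g)
    (hfg : Integrable (fun ω => f (X ω) + g (Y ω)) μ) :
    cExp μ X (fun ω => f (X ω) + g (Y ω)) =ᵐ[μ] fun ω => f (X ω) + ∫ ω', g (Y ω') ∂μ := by
  obtain ⟨hfX, hgY⟩ :=
    hXY.integrable_comp_of_integrable_add hX.aemeasurable hY.aemeasurable hf hg hfg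
  have hfX_cond : cExp μ X (fun ω => f (X ω)) = fun ω => f (X ω) :=
    condExp_of_stronglyMeasurable hX.comap_le
      (hf.comp (comap_measurable X)).stronglyMeasurable hfX
  have hgY_cond : cExp μ X (fun ω => g (Y ω)) =ᵐ[μ] fun _ => ∫ ω', g (Y ω') ∂μ :=
    condExp_indep_eq hY.comap_le hX.comap_le (hg.comp (comap_measurable Y)).stronglyMeasurable
      ((IndepFun_iff_Indep Y X μ).mp hXY.symm)
  filter_upwards [condExp_add hfX hgY (MeasurableSpace.comap X ‹_›), hgY_cond] with ω hadd hgω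
  refine hadd.trans ?_
  change cExp μ X _ ω + cExp μ X _ ω = _
  rw [hfX_cond, hgω]

end Independence

theorem MeasurableSpace.comap_le_comap_prodMk {α β γ : Type*} {mβ : MeasurableSpace β}
    {mγ : MeasurableSpace γ} (X : α → β) (Y : α → γ) :
    mβ.comap X ≤ (mβ.prod mγ).comap (fun ω => (X ω, Y ω)) :=
  comap_prodMk X Y ▸ le_sup_left

section AdditiveExposure

variable {Ω 𝓖 𝓤 : Type*} [MeasurableSpace Ω] [MeasurableSpace 𝓖] [MeasurableSpace 𝓤]
  {μ : Measure Ω} [IsProbabilityMeasure μ] {A : Ω → ℝ} {G : Ω → 𝓖} {U : Ω → 𝓤}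
  {αg : 𝓖 → ℝ} {αu : 𝓤 → ℝ}

theorem cExp_eq_of_cExp_prodMk_eq_add (hGU : IndepFun G U μ) (hG : Measurable G)
    (hU : Measurable U) (hαg : Measurable αg) (hαu : Measurable αu)
    (hexp : cExp μ (fun ω => (G ω, U ω)) A =ᵐ[μ] fun ω => αg (G ω) + αu (U ω)) :
    cExp μ G A =ᵐ[μ] fun ω => αg (G ω) + ∫ ω', αu (U ω') ∂μ :=
  calc cExp μ G A
      =ᵐ[μ] μ[cExp μ (fun ω => (G ω, U ω)) A | MeasurableSpace.comap G ‹_›] :=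
        (condExp_condExp_of_le (MeasurableSpace.comap_le_comap_prodMk G U)
          (hG.prodMk hU).comap_le).symm
    _ =ᵐ[μ] cExp μ G (fun ω => αg (G ω) + αu (U ω)) := condExp_congr_ae hexp
    _ =ᵐ[μ] fun ω => αg (G ω) + ∫ ω', αu (U ω') ∂μ :=
        hGU.cExp_comp_add_comp hG hU hαg hαu (integrable_condExp.congr hexp)

theorem cExp_prodMk_sub_cExp_of_cExp_prodMk_eq_add (hGU : IndepFun G U μ) (hA : Integrable A μ)
    (hG : Measurable G) (hU : Measurable U) (hαg : Measurable αg) (hαu : Measurable αu)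
    (hexp : cExp μ (fun ω => (G ω, U ω)) A =ᵐ[μ] fun ω => αg (G ω) + αu (U ω)) :
    cExp μ (fun ω => (G ω, U ω)) (fun ω => A ω - cExp μ G A ω)
      =ᵐ[μ] fun ω => αu (U ω) - ∫ ω', αu (U ω') ∂μ := by
  have hE : cExp μ (fun ω => (G ω, U ω)) (cExp μ G A) = cExp μ G A :=
    condExp_of_stronglyMeasurable (hG.prodMk hU).comap_le
      (stronglyMeasurable_condExp.mono (MeasurableSpace.comap_le_comap_prodMk G U))
      integrable_condExp
  have hsub : cExp μ (fun ω => (G ω, U ω)) (fun ω => A ω - cExp μ G A ω)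
      =ᵐ[μ] cExp μ (fun ω => (G ω, U ω)) A - cExp μ (fun ω => (G ω, U ω)) (cExp μ G A) :=
    condExp_sub hA integrable_condExp _
  filter_upwards [hsub, hexp, cExp_eq_of_cExp_prodMk_eq_add hGU hG hU hαg hαu hexp]
    with ω hsubω hAω hEω
  rw [hsubω, Pi.sub_apply, hE, hAω, hEω]
  ring

end AdditiveExposure

theorem stmt12_general {Ω 𝓤 : Type*} [MeasurableSpace Ω] [MeasurableSpace 𝓤]
    (μ : Measure Ω) [IsProbabilityMeasure μ]
    (A G D : Ω → ℝ) (U : Ω → 𝓤)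
    (hAm : Measurable A) (hGm : Measurable G) (hUm : Measurable U)
    (αg : ℝ → ℝ) (αu k : 𝓤 → ℝ)
    (hαgm : Measurable αg) (hαum : Measurable αu) (hkm : Measurable k)
    -- G is independent of U
    (hIndep : IndepFun G U μ)
    -- E(A|G,U) = α_g(G) + α_u(U) almost surely
    (hexp : cExp μ (fun ω => (G ω, U ω)) A =ᵐ[μ] fun ω => αg (G ω) + αu (U ω))
    -- E(D|A,G,U) = k(U) almost surely
    (hD : cExp μ (fun ω => (A ω, G ω, U ω)) D =ᵐ[μ] fun ω => k (U ω))
    -- all expectations appearing in the statement are assumed finite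
    (hIntG : Integrable G μ) (hIntA : Integrable A μ) (hIntD : Integrable D μ)
    (hInt1 : Integrable (fun ω => D ω * (G ω - ∫ ω', G ω' ∂μ)) μ)
    (hInt2 : Integrable
      (fun ω => D ω * (G ω - ∫ ω', G ω' ∂μ) * (A ω - cExp μ G A ω)) μ) :
    (∫ ω, D ω * (G ω - ∫ ω', G ω' ∂μ) ∂μ = 0) ∧
    (∫ ω, D ω * (G ω - ∫ ω', G ω' ∂μ) * (A ω - cExp μ G A ω) ∂μ = 0) := by
  set c := ∫ ω', G ω' ∂μ
  have hAGU := comap_measurable (m := inferInstance) fun ω => (A ω, G ω, U ω)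
  have hG_AGU := (measurable_fst.comp measurable_snd).comp hAGU
  have hle_AGU := (hAm.prodMk (hGm.prodMk hUm)).comap_le
  have hGU := comap_measurable (m := inferInstance) fun ω => (G ω, U ω)
  constructor
  · calc ∫ ω, D ω * (G ω - c) ∂μ = ∫ ω, (G ω - c) * D ω ∂μ := by simp_rw [mul_comm]
      _ = ∫ ω, (G ω - c) * k (U ω) ∂μ :=
          integral_mul_eq_of_condExp_ae_eq hle_AGU (hG_AGU.sub_const c).aestronglyMeasurable
            (by simpa only [mul_comm] using hInt1) hIntD hD
      _ = 0 := (hIndep.comp measurable_id hkm).integral_sub_integral_mul_eq_zero hIntG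
          (hkm.comp hUm).aestronglyMeasurable
  · have hkαu : Measurable fun u => k u * (αu u - ∫ ω', αu (U ω') ∂μ) :=
      hkm.mul (hαum.sub_const _)
    calc ∫ ω, D ω * (G ω - c) * (A ω - cExp μ G A ω) ∂μ
        = ∫ ω, (G ω - c) * (k (U ω) * (αu (U ω) - ∫ ω', αu (U ω') ∂μ)) ∂μ :=
          integral_mul_mul_eq_of_condExp_ae_eq (measurable_snd.comp hAGU).comap_le hle_AGU
            ((measurable_fst.comp hGU).sub_const c).stronglyMeasurable
            (hkm.comp (measurable_snd.comp hGU)).stronglyMeasurable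
            ((measurable_fst.comp hAGU).stronglyMeasurable.sub
              (stronglyMeasurable_condExp.mono hG_AGU.comap_le))
            hIntD (hIntA.sub integrable_condExp) hInt2 hD
            (cExp_prodMk_sub_cExp_of_cExp_prodMk_eq_add hIndep hIntA hGm hUm hαgm hαum hexp)
      _ = 0 := (hIndep.comp measurable_id hkαu).integral_sub_integral_mul_eq_zero hIntG
          (hkαu.comp hUm).aestronglyMeasurable

/-- core moment computation for MR GENIUS with censored survival
outcomes, Lemma 4.4. If `G ⫫ U`, `E(A|G,U) = α_g(G) + α_u(U)` a.s., and `D` is an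
integrable random variable with `E(D|A,G,U) = k(U)` a.s., then
`E[D·{G−E(G)}] = 0` and `E[D·{G−E(G)}·{A−E(A|G)}] = 0`. -/
theorem stmt12 {Ω 𝓤 : Type*} [MeasurableSpace Ω] [MeasurableSpace 𝓤]
    (μ : Measure Ω) [IsProbabilityMeasure μ]
    (A G D : Ω → ℝ) (U : Ω → 𝓤)
    (hAm : Measurable A) (hGm : Measurable G) (hDm : Measurable D) (hUm : Measurable U)
    (αg : ℝ → ℝ) (αu k : 𝓤 → ℝ)
    (hαgm : Measurable αg) (hαum : Measurable αu) (hkm : Measurable k)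
    -- G is independent of U
    (hIndep : IndepFun G U μ)
    -- E(A|G,U) = α_g(G) + α_u(U) almost surely
    (hexp : cExp μ (fun ω => (G ω, U ω)) A =ᵐ[μ] fun ω => αg (G ω) + αu (U ω))
    -- E(D|A,G,U) = k(U) almost surely
    (hD : cExp μ (fun ω => (A ω, G ω, U ω)) D =ᵐ[μ] fun ω => k (U ω))
    -- all expectations appearing in the statement are assumed finite
    (hIntG : Integrable G μ) (hIntA : Integrable A μ) (hIntD : Integrable D μ)
    (hIntk : Integrable (fun ω => k (U ω)) μ)
    (hInt1 : Integrable (fun ω => D ω * (G ω - ∫ ω', G ω' ∂μ)) μ)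
    (hInt2 : Integrable
      (fun ω => D ω * (G ω - ∫ ω', G ω' ∂μ) * (A ω - cExp μ G A ω)) μ) :
    (∫ ω, D ω * (G ω - ∫ ω', G ω' ∂μ) ∂μ = 0) ∧
    (∫ ω, D ω * (G ω - ∫ ω', G ω' ∂μ) * (A ω - cExp μ G A ω) ∂μ = 0) :=
  stmt12_general μ A G D U hAm hGm hUm αg αu k hαgm hαum hkm hIndep hexp hD hIntG hIntA hIntD hInt1
    hInt2
end

section
/- Let A and G be square-integrable real-valued random variables with E(A²·|G|) finite. Then E[{G−E(G)}·{A−E(A|G)}·A] = E[{G−E(G)}·var(A|G)] = cov(G, var(A|G)). -/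
open MeasureTheory ProbabilityTheory

lemma jensen_sq_aux {Ω : Type*} {m : MeasurableSpace Ω} [m0 : MeasurableSpace Ω]
    (hm : m ≤ m0) (μ : Measure Ω) [IsFiniteMeasure μ] {A : Ω → ℝ}
    (hA1 : Integrable A μ) (hA2 : Integrable (fun ω => A ω ^ 2) μ) :
    ∀ᵐ ω ∂μ, ((μ[A|m]) ω) ^ 2 ≤ (μ[(fun ω' => A ω' ^ 2)|m]) ω := by
  haveI : SigmaFinite (μ.trim hm) := by infer_instance
  have key : ∀ t : ℚ, ∀ᵐ ω ∂μ,
      2 * (t : ℝ) * (μ[A|m]) ω - (t : ℝ) ^ 2 ≤ (μ[(fun ω' => A ω' ^ 2)|m]) ω := by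
    intro t
    have h0 : 0 ≤ᵐ[μ] μ[(fun ω => (A ω - (t : ℝ)) ^ 2)|m] :=
      condExp_nonneg (Filter.Eventually.of_forall fun ω => sq_nonneg _)
    have hrw : (fun ω => (A ω - (t : ℝ)) ^ 2)
        = (fun ω => A ω ^ 2) - ((2 * (t : ℝ)) • A) + (fun _ => (t : ℝ) ^ 2) := by
      funext ω; simp [Pi.smul_apply, smul_eq_mul]; ring
    have hexp : μ[(fun ω => (A ω - (t : ℝ)) ^ 2)|m]
        =ᵐ[μ] fun ω => (μ[(fun ω' => A ω' ^ 2)|m]) ω - 2 * (t : ℝ) * (μ[A|m]) ω + (t : ℝ) ^ 2 := by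
      rw [hrw]
      have h1 := condExp_add (μ := μ) (m := m) (hA2.sub (hA1.smul (2 * (t : ℝ))))
        (integrable_const ((t : ℝ) ^ 2))
      have h2 := condExp_sub (μ := μ) (m := m) hA2 (hA1.smul (2 * (t : ℝ)))
      have h3 := condExp_smul (μ := μ) (m := m) (2 * (t : ℝ)) A
      have h4 := condExp_const (μ := μ) hm ((t : ℝ) ^ 2)
      filter_upwards [h1, h2, h3] with ω hω1 hω2 hω3
      simp only [Pi.add_apply, Pi.sub_apply, Pi.smul_apply, smul_eq_mul] at *
      rw [hω1, hω2, hω3, h4]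
    filter_upwards [h0, hexp] with ω h0ω hexpω
    simp only [Pi.zero_apply] at h0ω
    rw [hexpω] at h0ω
    linarith
  have hall := (ae_all_iff).mpr key
  filter_upwards [hall] with ω hω
  set x := (μ[A|m]) ω
  set y := (μ[(fun ω' => A ω' ^ 2)|m]) ω
  by_contra h
  push_neg at h
  have hpos : 0 < x ^ 2 - y := by linarith
  obtain ⟨t, ht⟩ := exists_rat_near x (Real.sqrt_pos.mpr hpos)
  have hs := Real.sq_sqrt hpos.le
  have habs := abs_lt.mp ht
  have hsn := Real.sqrt_nonneg (x ^ 2 - y)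
  have h1 := hω t
  nlinarith [sq_nonneg (x - (t : ℝ))]

lemma pullout_aux {Ω : Type*} {m : MeasurableSpace Ω} [m0 : MeasurableSpace Ω]
    (hm : m ≤ m0) (μ : Measure Ω) [IsFiniteMeasure μ] {f g : Ω → ℝ}
    (hf : StronglyMeasurable[m] f) (hfg : Integrable (fun ω => f ω * g ω) μ)
    (hg : Integrable g μ) :
    Integrable (fun ω => f ω * (μ[g|m]) ω) μ ∧
      ∫ ω, f ω * g ω ∂μ = ∫ ω, f ω * (μ[g|m]) ω ∂μ := by
  haveI : SigmaFinite (μ.trim hm) := by infer_instance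
  have h := condExp_mul_of_stronglyMeasurable_left (μ := μ) hf hfg hg
  constructor
  · exact integrable_condExp.congr h
  · calc ∫ ω, f ω * g ω ∂μ = ∫ ω, (μ[f * g|m]) ω ∂μ := (integral_condExp hm).symm
      _ = ∫ ω, f ω * (μ[g|m]) ω ∂μ := integral_congr_ae h

lemma main_aux {Ω : Type*} {m : MeasurableSpace Ω} [m0 : MeasurableSpace Ω]
    (hm : m ≤ m0) (μ : Measure Ω) [IsProbabilityMeasure μ]
    (A G : Ω → ℝ) (hAm : Measurable A) (hGm : Measurable G)
    (hGsm : StronglyMeasurable[m] G)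
    (hA1 : Integrable A μ) (hA2 : Integrable (fun ω => (A ω) ^ 2) μ)
    (hG1 : Integrable G μ)
    (hA2G : Integrable (fun ω => (A ω) ^ 2 * |G ω|) μ) :
    (∫ ω, (G ω - ∫ ω', G ω' ∂μ) * (A ω - (μ[A|m]) ω) * A ω ∂μ
        = ∫ ω, (G ω - ∫ ω', G ω' ∂μ) *
            ((μ[(fun ω' => A ω' ^ 2)|m]) ω - ((μ[A|m]) ω) ^ 2) ∂μ) ∧
    (∫ ω, (G ω - ∫ ω', G ω' ∂μ) *
            ((μ[(fun ω' => A ω' ^ 2)|m]) ω - ((μ[A|m]) ω) ^ 2) ∂μ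
        = (∫ ω, G ω * ((μ[(fun ω' => A ω' ^ 2)|m]) ω - ((μ[A|m]) ω) ^ 2) ∂μ)
            - (∫ ω, G ω ∂μ) *
              (∫ ω, (μ[(fun ω' => A ω' ^ 2)|m]) ω - ((μ[A|m]) ω) ^ 2 ∂μ)) := by
  set c := ∫ ω', G ω' ∂μ with hc
  set EA := μ[A|m] with hEA
  set S := μ[(fun ω' => A ω' ^ 2)|m] with hS
  have hJ : ∀ᵐ ω ∂μ, (EA ω) ^ 2 ≤ S ω := jensen_sq_aux hm μ hA1 hA2
  have hEAaesm : AEStronglyMeasurable EA μ :=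
    (stronglyMeasurable_condExp.mono hm).aestronglyMeasurable
  have hSaesm : AEStronglyMeasurable S μ :=
    (stronglyMeasurable_condExp.mono hm).aestronglyMeasurable
  have hGcsm : StronglyMeasurable[m] (fun ω => G ω - c) :=
    hGsm.sub stronglyMeasurable_const
  have hGcabs : StronglyMeasurable[m] (fun ω => |G ω - c|) := by
    simpa only [Real.norm_eq_abs] using hGcsm.norm
  have hGabs : StronglyMeasurable[m] (fun ω => |G ω|) := by
    simpa only [Real.norm_eq_abs] using hGsm.norm
  -- basic integrabilities
  have hbnd : Integrable (fun ω => A ω ^ 2 * |G ω| + |c| * A ω ^ 2) μ :=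
    hA2G.add (hA2.const_mul |c|)
  have habs_bound : ∀ ω, ‖(G ω - c) * A ω ^ 2‖ ≤ A ω ^ 2 * |G ω| + |c| * A ω ^ 2 := by
    intro ω
    rw [Real.norm_eq_abs, abs_mul, abs_of_nonneg (sq_nonneg (A ω))]
    have h1 : |G ω - c| ≤ |G ω| + |c| := abs_sub (G ω) c
    nlinarith [sq_nonneg (A ω), abs_nonneg (G ω), abs_nonneg c]
  have hGcA2 : Integrable (fun ω => (G ω - c) * A ω ^ 2) μ := by
    refine hbnd.mono' ((hGm.sub measurable_const).mul
      (hAm.pow_const 2)).aestronglyMeasurable ?_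
    exact Filter.Eventually.of_forall habs_bound
  have hGcA2' : Integrable (fun ω => |G ω - c| * A ω ^ 2) μ := by
    refine hbnd.mono' (((hGm.sub measurable_const).abs.mul
      (hAm.pow_const 2)).aestronglyMeasurable) ?_
    refine Filter.Eventually.of_forall fun ω => ?_
    rw [Real.norm_eq_abs, abs_mul, abs_abs, abs_of_nonneg (sq_nonneg (A ω))]
    have h1 : |G ω - c| ≤ |G ω| + |c| := abs_sub (G ω) c
    nlinarith [sq_nonneg (A ω), abs_nonneg (G ω), abs_nonneg c]
  have hGA2 : Integrable (fun ω => G ω * A ω ^ 2) μ := by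
    refine hA2G.mono' ((hGm.mul (hAm.pow_const 2)).aestronglyMeasurable) ?_
    refine Filter.Eventually.of_forall fun ω => ?_
    rw [Real.norm_eq_abs, abs_mul, abs_of_nonneg (sq_nonneg (A ω))]
    nlinarith [sq_nonneg (A ω), abs_nonneg (G ω)]
  have hGA2' : Integrable (fun ω => |G ω| * A ω ^ 2) μ := by
    refine hA2G.mono' ((hGm.abs.mul (hAm.pow_const 2)).aestronglyMeasurable) ?_
    refine Filter.Eventually.of_forall fun ω => ?_
    rw [Real.norm_eq_abs, abs_mul, abs_abs, abs_of_nonneg (sq_nonneg (A ω))]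
    nlinarith [sq_nonneg (A ω), abs_nonneg (G ω)]
  -- pull-out results
  obtain ⟨hP1i, hP1⟩ := pullout_aux hm μ hGcsm hGcA2 hA2
  obtain ⟨hP1i', _⟩ := pullout_aux hm μ hGcabs hGcA2' hA2
  obtain ⟨hP3i, _⟩ := pullout_aux hm μ hGsm hGA2 hA2
  obtain ⟨hP3i', _⟩ := pullout_aux hm μ hGabs hGA2' hA2
  -- integrability of (G-c) * EA * A
  have hF4 : Integrable (fun ω => (G ω - c) * EA ω * A ω) μ := by
    refine (hP1i'.add hGcA2').mono'
      (((hGm.sub measurable_const).aestronglyMeasurable.mul hEAaesm).mul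
        hAm.aestronglyMeasurable) ?_
    filter_upwards [hJ] with ω hω
    simp only [Pi.add_apply]
    rw [Real.norm_eq_abs, abs_mul, abs_mul]
    nlinarith [abs_nonneg (G ω - c), sq_abs (EA ω), sq_abs (A ω),
      sq_nonneg (|EA ω| - |A ω|), abs_nonneg (EA ω), abs_nonneg (A ω)]
  obtain ⟨hP2i, hP2⟩ := pullout_aux (f := fun ω => (G ω - c) * EA ω) (g := A) hm μ
    (hGcsm.mul stronglyMeasurable_condExp) hF4 hA1
  simp only [← hS, ← hEA] at hP1 hP1i hP1i' hP3i hP3i' hP2 hP2i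
  -- integrability of EA^2 and related
  have hEA2aesm : AEStronglyMeasurable (fun ω => EA ω ^ 2) μ :=
    (hEAaesm.mul hEAaesm).congr
      (Filter.Eventually.of_forall fun ω => by show EA ω * EA ω = EA ω ^ 2; ring)
  have hEA2int : Integrable (fun ω => EA ω ^ 2) μ := by
    refine Integrable.mono' (g := S) integrable_condExp hEA2aesm ?_
    filter_upwards [hJ] with ω hω
    rw [Real.norm_eq_abs, abs_of_nonneg (sq_nonneg _)]
    exact hω
  have hGEA2int : Integrable (fun ω => G ω * EA ω ^ 2) μ := by
    refine hP3i'.mono' (hGm.aestronglyMeasurable.mul hEA2aesm) ?_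
    filter_upwards [hJ] with ω hω
    rw [Real.norm_eq_abs, abs_mul, abs_of_nonneg (sq_nonneg (EA ω))]
    exact mul_le_mul_of_nonneg_left hω (abs_nonneg _)
  have hVint : Integrable (fun ω => S ω - EA ω ^ 2) μ := integrable_condExp.sub hEA2int
  have hGVint : Integrable (fun ω => G ω * (S ω - EA ω ^ 2)) μ := by
    refine (hP3i.sub hGEA2int).congr
      (Filter.Eventually.of_forall fun ω => by simp only [Pi.sub_apply]; ring)
  constructor
  · have hsplit : ∀ ω, (G ω - c) * (A ω - EA ω) * A ω
        = (G ω - c) * A ω ^ 2 - (G ω - c) * EA ω * A ω := fun ω => by ring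
    calc ∫ ω, (G ω - c) * (A ω - EA ω) * A ω ∂μ
        = ∫ ω, ((G ω - c) * A ω ^ 2 - (G ω - c) * EA ω * A ω) ∂μ := by
          exact integral_congr_ae (Filter.Eventually.of_forall hsplit)
      _ = (∫ ω, (G ω - c) * A ω ^ 2 ∂μ) - ∫ ω, (G ω - c) * EA ω * A ω ∂μ :=
          integral_sub hGcA2 hF4
      _ = (∫ ω, (G ω - c) * S ω ∂μ) - ∫ ω, (G ω - c) * EA ω * EA ω ∂μ := by
          rw [hP1, hP2]
      _ = ∫ ω, ((G ω - c) * S ω - (G ω - c) * EA ω * EA ω) ∂μ :=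
          (integral_sub hP1i hP2i).symm
      _ = ∫ ω, (G ω - c) * (S ω - EA ω ^ 2) ∂μ :=
          integral_congr_ae (Filter.Eventually.of_forall fun ω => by ring)
  · calc ∫ ω, (G ω - c) * (S ω - EA ω ^ 2) ∂μ
        = ∫ ω, (G ω * (S ω - EA ω ^ 2) - c * (S ω - EA ω ^ 2)) ∂μ :=
          integral_congr_ae (Filter.Eventually.of_forall fun ω => by ring)
      _ = (∫ ω, G ω * (S ω - EA ω ^ 2) ∂μ) - ∫ ω, c * (S ω - EA ω ^ 2) ∂μ :=
          integral_sub hGVint (hVint.const_mul c)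
      _ = (∫ ω, G ω * (S ω - EA ω ^ 2) ∂μ) - c * ∫ ω, (S ω - EA ω ^ 2) ∂μ := by
          rw [integral_const_mul]


/-- For square-integrable `A` and `G` with `E(A²·|G|) < ∞`,
`E[{G−E(G)}·{A−E(A|G)}·A] = E[{G−E(G)}·var(A|G)] = cov(G, var(A|G))`:
the denominator of the MR GENIUS functional equals the covariance between the
instrument and the conditional variance of the exposure. -/
theorem stmt14 {Ω : Type*} [MeasurableSpace Ω] (μ : Measure Ω) [IsProbabilityMeasure μ]
    (A G : Ω → ℝ) (hAm : Measurable A) (hGm : Measurable G)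
    -- A and G are square integrable, and E(A²·|G|) is finite
    (hA1 : Integrable A μ) (hA2 : Integrable (fun ω => (A ω) ^ 2) μ)
    (hG1 : Integrable G μ) (hG2 : Integrable (fun ω => (G ω) ^ 2) μ)
    (hA2G : Integrable (fun ω => (A ω) ^ 2 * |G ω|) μ) :
    (∫ ω, (G ω - ∫ ω', G ω' ∂μ) * (A ω - cExp μ G A ω) * A ω ∂μ
        = ∫ ω, (G ω - ∫ ω', G ω' ∂μ) * cVar μ G A ω ∂μ) ∧
    (∫ ω, (G ω - ∫ ω', G ω' ∂μ) * cVar μ G A ω ∂μ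
        = (∫ ω, G ω * cVar μ G A ω ∂μ)
            - (∫ ω, G ω ∂μ) * (∫ ω, cVar μ G A ω ∂μ)) := by
  have hGmm : Measurable[MeasurableSpace.comap G inferInstance] G :=
    Measurable.of_comap_le le_rfl
  unfold cVar cExp
  exact main_aux hGm.comap_le μ A G hAm hGm hGmm.stronglyMeasurable hA1 hA2 hG1 hA2G
end
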